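/- Let f : E → ℝ∪{+∞} be lower semicontinuous and prox-bounded, x a point with f(x) finite, and v ∈ E a vector in the Fréchet subdifferential of f at x. If α_i ↓ 0 and x_i ∈ P_{α_i} f(x + α_i v) (the proximal mapping), then (x_i − x)/α_i → 0 and (f_{α_i}(x + α_i v) − f(x))/α_i → |v|²/2. -/

import Mathlib

open Filter Topology RealInnerProductSpace

/-- The Moreau envelope. -/
noncomputable def mEnv {E : Type*} [NormedAddCommGroup E] [InnerProductSpace ℝ E]
    (f : E → EReal) (α : ℝ) (x : E) : EReal :=
  ⨅ y, f y + ((‖y - x‖ ^ 2 / (2 * α) : ℝ) : EReal)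

/-- The proximal mapping `P_α f(x) = argmin_y { f(y) + ‖y−x‖²/(2α) }`. -/
def proxSet {E : Type*} [NormedAddCommGroup E] [InnerProductSpace ℝ E]
    (f : E → EReal) (α : ℝ) (x : E) : Set E :=
  {y | ∀ z, f y + ((‖y - x‖ ^ 2 / (2 * α) : ℝ) : EReal)
      ≤ f z + ((‖z - x‖ ^ 2 / (2 * α) : ℝ) : EReal)}

/-- `v` is a Fréchet subgradient of `f` at `x`:
`f(y) ≥ f(x) + ⟨v, y−x⟩ + o(‖y−x‖)`. -/
def FSubgrad {E : Type*} [NormedAddCommGroup E] [InnerProductSpace ℝ E]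
    (f : E → EReal) (x v : E) : Prop :=
  ∀ ε : ℝ, 0 < ε → ∀ᶠ y in nhds x,
    f x + (((inner ℝ v (y - x) : ℝ) - ε * ‖y - x‖) : EReal) ≤ f y

/-- `f` is prox-bounded: it majorizes some quadratic. -/
def ProxBounded {E : Type*} [NormedAddCommGroup E] [InnerProductSpace ℝ E]
    (f : E → EReal) : Prop :=
  ∃ r c : ℝ, ∀ y, ((-(r / 2) * ‖y‖ ^ 2 - c : ℝ) : EReal) ≤ f y

/-! Rescale by `α`: with `uᵢ = (xᵢ - x)/αᵢ` and `sᵢ = (f(xᵢ) - f(x))/αᵢ`, comparing the prox value with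
the competitor `x` gives `sᵢ + ‖uᵢ - v‖²/2 ≤ ‖v‖²/2`, while the Fréchet inequality (applicable
because prox-boundedness forces `xᵢ → x`) gives `⟪v, uᵢ⟫ - ε‖uᵢ‖ ≤ sᵢ` eventually, for every `ε > 0`.
Expanding `‖uᵢ - v‖²` the two combine to `‖uᵢ‖²/2 ≤ ε‖uᵢ‖`, so `uᵢ → 0`; and the rescaled envelope
gap is exactly `sᵢ + ‖uᵢ - v‖²/2`, squeezed between `‖v‖²/2 - ‖uᵢ‖` and `‖v‖²/2`. -/

section InnerProduct

variable {E : Type*} [NormedAddCommGroup E] [InnerProductSpace ℝ E]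

theorem le_add_half_norm_sub_sq_of_inner_sub_le {u v : E} {s ε : ℝ}
    (h : ⟪v, u⟫ - ε * ‖u‖ ≤ s) :
    ‖u‖ ^ 2 / 2 - ε * ‖u‖ + ‖v‖ ^ 2 / 2 ≤ s + ‖u - v‖ ^ 2 / 2 := by
  rw [norm_sub_sq_real, real_inner_comm]
  linarith

theorem norm_le_of_inner_sub_le {u v : E} {s ε : ℝ} (hε : 0 ≤ ε) (h : ⟪v, u⟫ - ε * ‖u‖ ≤ s)
    (hs : s + ‖u - v‖ ^ 2 / 2 ≤ ‖v‖ ^ 2 / 2) : ‖u‖ ≤ 2 * ε := by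
  have := le_add_half_norm_sub_sq_of_inner_sub_le h
  by_contra! hlt
  nlinarith [mul_pos (hε.trans_lt (by linarith : ε < ‖u‖)) (by linarith : 0 < ‖u‖ - 2 * ε)]

variable {ι : Type*} {l : Filter ι} {u : ι → E} {v : E} {s : ι → ℝ}

theorem tendsto_zero_of_eventually_inner_sub_le
    (hs : ∀ i, s i + ‖u i - v‖ ^ 2 / 2 ≤ ‖v‖ ^ 2 / 2)
    (hsub : ∀ ε > 0, ∀ᶠ i in l, ⟪v, u i⟫ - ε * ‖u i‖ ≤ s i) :
    Tendsto u l (𝓝 0) := by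
  rw [NormedAddGroup.tendsto_nhds_zero]
  intro ε hε
  filter_upwards [hsub (ε / 3) (by positivity)] with i hi
  linarith [norm_le_of_inner_sub_le (by positivity) hi (hs i)]

theorem tendsto_half_norm_sq_of_eventually_inner_sub_le
    (hs : ∀ i, s i + ‖u i - v‖ ^ 2 / 2 ≤ ‖v‖ ^ 2 / 2)
    (hsub : ∀ ε > 0, ∀ᶠ i in l, ⟪v, u i⟫ - ε * ‖u i‖ ≤ s i) :
    Tendsto (fun i => s i + ‖u i - v‖ ^ 2 / 2) l (𝓝 (‖v‖ ^ 2 / 2)) := by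
  have hu : Tendsto (fun i => ‖v‖ ^ 2 / 2 - ‖u i‖) l (𝓝 (‖v‖ ^ 2 / 2)) := by
    simpa using (tendsto_zero_of_eventually_inner_sub_le hs hsub).norm.const_sub (‖v‖ ^ 2 / 2)
  refine tendsto_of_tendsto_of_tendsto_of_le_of_le' hu tendsto_const_nhds ?_
    (Eventually.of_forall hs)
  filter_upwards [hsub 1 one_pos] with i hi
  have := le_add_half_norm_sub_sq_of_inner_sub_le hi
  nlinarith [sq_nonneg ‖u i‖]

theorem norm_sub_add_smul_sq_div {α : ℝ} (hα : 0 < α) (p x v : E) :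
    ‖p - (x + α • v)‖ ^ 2 / (2 * α) = α * (‖α⁻¹ • (p - x) - v‖ ^ 2 / 2) := by
  have : α⁻¹ • (p - x) - v = α⁻¹ • (p - (x + α • v)) := by
    simp only [smul_sub, smul_add, inv_smul_smul₀ hα.ne']
    abel
  rw [this, norm_smul, mul_pow, norm_inv, Real.norm_of_nonneg hα.le]
  field_simp

end InnerProduct

section Prox

variable {E : Type*} [NormedAddCommGroup E] [InnerProductSpace ℝ E] {f : E → EReal}

theorem mEnv_eq_of_mem_proxSet {α : ℝ} {y p : E} (hp : p ∈ proxSet f α y) :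
    mEnv f α y = f p + ((‖p - y‖ ^ 2 / (2 * α) : ℝ) : EReal) :=
  le_antisymm (iInf_le _ p) (le_iInf hp)

theorem ProxBounded.exists_nonneg (hf : ProxBounded f) :
    ∃ r c : ℝ, 0 ≤ r ∧ ∀ y, ((-(r / 2) * ‖y‖ ^ 2 - c : ℝ) : EReal) ≤ f y := by
  obtain ⟨r, c, hrc⟩ := hf
  refine ⟨max r 0, c, le_max_right _ _, fun y => (hrc y).trans' ?_⟩
  rw [EReal.coe_le_coe_iff]
  nlinarith [le_max_left r 0, sq_nonneg ‖y‖]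

theorem ProxBounded.ne_bot (hf : ProxBounded f) (y : E) : f y ≠ ⊥ := by
  obtain ⟨r, c, hrc⟩ := hf
  exact ne_bot_of_le_ne_bot (EReal.coe_ne_bot _) (hrc y)

theorem ProxBounded.exists_eq_coe_of_mem_proxSet (hf : ProxBounded f) {x : E} {fx : ℝ}
    (hfx : f x = fx) {α : ℝ} {y p : E} (hp : p ∈ proxSet f α y) :
    ∃ g : ℝ, f p = g ∧ g + ‖p - y‖ ^ 2 / (2 * α) ≤ fx + ‖x - y‖ ^ 2 / (2 * α) := by
  have hle := hp x
  rw [hfx, ← EReal.coe_add] at hle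
  have hp_top : f p ≠ ⊤ := by
    rintro h
    rw [h, EReal.top_add_coe, top_le_iff] at hle
    exact EReal.coe_ne_top _ hle
  refine ⟨(f p).toReal, (EReal.coe_toReal hp_top (hf.ne_bot p)).symm, ?_⟩
  rwa [← EReal.coe_toReal hp_top (hf.ne_bot p), ← EReal.coe_add, EReal.coe_le_coe_iff] at hle

/- Compare with `x`, then absorb the term `α r ‖p‖² ≤ 2 α r (‖p - y‖² + ‖y‖²)` coming from the
quadratic minorant into the left side, which `4 r α ≤ 1` allows. -/
theorem norm_sub_sq_le_of_mem_proxSet {r c : ℝ} (hr : 0 ≤ r)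
    (hrc : ∀ y, ((-(r / 2) * ‖y‖ ^ 2 - c : ℝ) : EReal) ≤ f y) {x : E} {fx : ℝ}
    (hfx : f x = fx) {α : ℝ} (hα : 0 < α) (hαr : 4 * r * α ≤ 1) {y p : E}
    (hp : p ∈ proxSet f α y) :
    ‖p - y‖ ^ 2 ≤ 4 * α * (fx + c) + 4 * α * r * ‖y‖ ^ 2 + 2 * ‖x - y‖ ^ 2 := by
  obtain ⟨g, hg, hle⟩ := ProxBounded.exists_eq_coe_of_mem_proxSet ⟨r, c, hrc⟩ hfx hp
  have hg_low := hrc p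
  rw [hg, EReal.coe_le_coe_iff] at hg_low
  have h2α : 0 < 2 * α := by positivity
  have hle' : ‖p - y‖ ^ 2 / (2 * α) ≤ (fx - g) + ‖x - y‖ ^ 2 / (2 * α) := by linarith
  rw [div_le_iff₀ h2α, add_mul, div_mul_cancel₀ _ h2α.ne'] at hle'
  have hp_norm : ‖p‖ ^ 2 ≤ 2 * ‖p - y‖ ^ 2 + 2 * ‖y‖ ^ 2 := by
    have := norm_add_le (p - y) y
    rw [sub_add_cancel] at this
    nlinarith [sq_nonneg (‖p - y‖ - ‖y‖), norm_nonneg p]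
  nlinarith [mul_le_mul_of_nonneg_left hp_norm (by positivity : 0 ≤ α * r)]

theorem ProxBounded.tendsto_of_mem_proxSet (hf : ProxBounded f) {x : E} {fx : ℝ}
    (hfx : f x = fx) {ι : Type*} {l : Filter ι} {α : ι → ℝ} {y p : ι → E}
    (hαpos : ∀ i, 0 < α i) (hα : Tendsto α l (𝓝 0)) (hy : Tendsto y l (𝓝 x))
    (hp : ∀ i, p i ∈ proxSet f (α i) (y i)) : Tendsto p l (𝓝 x) := by
  obtain ⟨r, c, hr, hrc⟩ := hf.exists_nonneg
  have hB : Tendsto (fun i => 4 * α i * (fx + c) + 4 * α i * r * ‖y i‖ ^ 2 + 2 * ‖x - y i‖ ^ 2)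
      l (𝓝 0) := by
    have hcont : Continuous fun q : ℝ × E =>
        4 * q.1 * (fx + c) + 4 * q.1 * r * ‖q.2‖ ^ 2 + 2 * ‖x - q.2‖ ^ 2 := by
      fun_prop
    simpa [Function.comp_def] using (hcont.tendsto (0, x)).comp (hα.prodMk_nhds hy)
  have hαr : ∀ᶠ i in l, 4 * r * α i ≤ 1 := by
    have : Tendsto (fun i => 4 * r * α i) l (𝓝 0) := by simpa using hα.const_mul (4 * r)
    exact this.eventually (eventually_le_nhds one_pos)
  have hpy : Tendsto (fun i => p i - y i) l (𝓝 0) := by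
    refine squeeze_zero_norm' ?_ (by simpa using hB.sqrt)
    filter_upwards [hαr] with i hi
    exact Real.le_sqrt_of_sq_le (norm_sub_sq_le_of_mem_proxSet hr hrc hfx (hαpos i) hi (hp i))
  simpa using hpy.add hy

end Prox

theorem statement1 {E : Type*} [NormedAddCommGroup E] [InnerProductSpace ℝ E]
    (f : E → EReal) (hpb : ProxBounded f)
    (x : E) (fx : ℝ) (hfx : f x = (fx : EReal))
    (v : E) (hv : FSubgrad f x v)
    (α : ℕ → ℝ) (hαpos : ∀ i, 0 < α i) (hα : Tendsto α atTop (nhds 0))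
    (xs : ℕ → E) (hxs : ∀ i, xs i ∈ proxSet f (α i) (x + α i • v)) :
    Tendsto (fun i => (α i)⁻¹ • (xs i - x)) atTop (nhds 0) ∧
      Tendsto (fun i => (mEnv f (α i) (x + α i • v) - f x) / ((α i : ℝ) : EReal))
        atTop (nhds ((‖v‖ ^ 2 / 2 : ℝ) : EReal)) := by
  choose g hg hg_le using fun i => hpb.exists_eq_coe_of_mem_proxSet hfx (hxs i)
  have hxs_lim : Tendsto xs atTop (𝓝 x) :=
    hpb.tendsto_of_mem_proxSet hfx hαpos hα (by simpa using (hα.smul_const v).const_add x) hxs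
  set u := fun i => (α i)⁻¹ • (xs i - x)
  set s := fun i => (g i - fx) / α i
  have hxs_eq : ∀ i, xs i - x = α i • u i := fun i => (smul_inv_smul₀ (hαpos i).ne' _).symm
  have hprox : ∀ i, s i + ‖u i - v‖ ^ 2 / 2 ≤ ‖v‖ ^ 2 / 2 := by
    intro i
    have h := hg_le i
    rw [norm_sub_add_smul_sq_div (hαpos i), norm_sub_add_smul_sq_div (hαpos i)] at h
    simp only [sub_self, smul_zero, zero_sub, norm_neg] at h
    rw [div_add' _ _ _ (hαpos i).ne', div_le_iff₀ (hαpos i)]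
    linarith
  have hsub : ∀ ε > 0, ∀ᶠ i in atTop, ⟪v, u i⟫ - ε * ‖u i‖ ≤ s i := by
    intro ε hε
    filter_upwards [hxs_lim.eventually (hv ε hε)] with i hi
    rw [hfx, hg i] at hi
    have hi' : fx + (⟪v, xs i - x⟫ - ε * ‖xs i - x‖) ≤ g i := mod_cast hi
    rw [hxs_eq i, inner_smul_right, norm_smul, Real.norm_of_nonneg (hαpos i).le] at hi'
    rw [le_div_iff₀ (hαpos i)]
    linarith
  have henv : ∀ i, (mEnv f (α i) (x + α i • v) - f x) / ((α i : ℝ) : EReal)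
      = ((s i + ‖u i - v‖ ^ 2 / 2 : ℝ) : EReal) := by
    intro i
    rw [mEnv_eq_of_mem_proxSet (hxs i), hg i, hfx, norm_sub_add_smul_sq_div (hαpos i),
      ← EReal.coe_add, ← EReal.coe_sub, ← EReal.coe_div]
    have hα0 := (hαpos i).ne'
    congr 1
    simp only [s, u]
    field_simp
    ring
  refine ⟨tendsto_zero_of_eventually_inner_sub_le hprox hsub, ?_⟩
  simpa only [henv] using
    EReal.tendsto_coe.2 (tendsto_half_norm_sq_of_eventually_inner_sub_le hprox hsub)
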